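/- The operator s + s* on H has no eigenvalues: if λ ∈ ℂ and ξ ∈ H satisfy (s + s*) ξ = λ ξ, then ξ = 0. -/

import Mathlib

/-!
Since `s + s*` is self-adjoint, an eigenvalue `λ` is real, say `λ = t`. In coordinates the eigenvalue
equation reads `v₁ = t v₀` and `v (n + 2) = t v (n + 1) - v n`. The transfer map `(x, y) ↦ (y, t y - x)`
of this recurrence has determinant one and preserves the real quadratic form
`|x|² + |y|² - t Re(x̄ y)`, which equals `|v₀|²` at `(v₀, v₁)`. Along an `ℓ²` sequence it tends to
`0`, so `v₀ = 0`, and then the recurrence kills every coordinate.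
-/

open ContinuousLinearMap

noncomputable section

/-- The Hilbert space `ℓ²(ℕ, ℂ)`. -/
abbrev H : Type := lp (fun _ : ℕ => ℂ) 2

/-- The standard orthonormal basis of `ℓ²(ℕ, ℂ)`. -/
def ξ (n : ℕ) : H := lp.single 2 n 1

open Filter Topology ComplexConjugate

theorem lp.tendsto_cofinite_zero {α E : Type*} [NormedAddCommGroup E] {p : ENNReal}
    (hp : 0 < p.toReal) (v : lp (fun _ : α => E) p) : Tendsto (⇑v) cofinite (𝓝 0) := by
  rw [tendsto_zero_iff_norm_tendsto_zero]
  have := (v.2.summable hp).tendsto_cofinite_zero.rpow_const (Or.inr (inv_nonneg.2 hp.le))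
  simpa [Real.zero_rpow (inv_ne_zero hp.ne'), Real.rpow_rpow_inv (norm_nonneg _) hp.ne'] using this

def transferEnergy (t : ℝ) (x y : ℂ) : ℝ :=
  Complex.normSq x + Complex.normSq y - t * (conj x * y).re

theorem transferEnergy_step (t : ℝ) (x y : ℂ) :
    transferEnergy t y (t * y - x) = transferEnergy t x y := by
  simp only [transferEnergy, Complex.normSq_apply, Complex.mul_re, Complex.mul_im, Complex.sub_re,
    Complex.sub_im, Complex.conj_re, Complex.conj_im, Complex.ofReal_re, Complex.ofReal_im]
  ring

theorem transferEnergy_mul_self (t : ℝ) (x : ℂ) :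
    transferEnergy t x (t * x) = Complex.normSq x := by
  simp only [transferEnergy, Complex.normSq_apply, Complex.mul_re, Complex.mul_im,
    Complex.conj_re, Complex.conj_im, Complex.ofReal_re, Complex.ofReal_im]
  ring

theorem continuous_transferEnergy (t : ℝ) :
    Continuous fun z : ℂ × ℂ => transferEnergy t z.1 z.2 := by
  unfold transferEnergy
  fun_prop

theorem eq_zero_of_chebyshev_recurrence_of_tendsto {t : ℝ} {a : ℕ → ℂ}
    (h₁ : a 1 = t * a 0) (hrec : ∀ n, a (n + 2) = t * a (n + 1) - a n)
    (hlim : Tendsto a atTop (𝓝 0)) : a = 0 := by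
  have hconst : ∀ n, transferEnergy t (a n) (a (n + 1)) = Complex.normSq (a 0) := by
    intro n
    induction n with
    | zero => rw [h₁, transferEnergy_mul_self]
    | succ n ih => rw [hrec, transferEnergy_step, ih]
  have hdecay : Tendsto (fun n => transferEnergy t (a n) (a (n + 1))) atTop
      (𝓝 (transferEnergy t 0 0)) :=
    (continuous_transferEnergy t).tendsto (0, 0) |>.comp
      (hlim.prodMk_nhds (hlim.comp (tendsto_add_atTop_nat 1)))
  have ha₀ : a 0 = 0 := by
    rw [funext hconst] at hdecay
    simpa [transferEnergy] using tendsto_nhds_unique tendsto_const_nhds hdecay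
  have hpair : ∀ n, a n = 0 ∧ a (n + 1) = 0 := by
    intro n
    induction n with
    | zero => exact ⟨ha₀, by rw [h₁, ha₀, mul_zero]⟩
    | succ n ih => exact ⟨ih.2, by rw [hrec, ih.1, ih.2, mul_zero, sub_zero]⟩
  exact funext fun n => (hpair n).1

theorem inner_ξ_left (x : H) (n : ℕ) : inner ℂ (ξ n) x = x n := by
  simp [ξ, lp.inner_single_left]

theorem adjoint_shift_apply {s : H →L[ℂ] H} (hs : ∀ n, s (ξ n) = ξ (n + 1)) (x : H) (n : ℕ) :
    adjoint s x n = x (n + 1) := by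
  rw [← inner_ξ_left, adjoint_inner_right, hs, inner_ξ_left]

theorem adjoint_shift_ξ_zero {s : H →L[ℂ] H} (hs : ∀ n, s (ξ n) = ξ (n + 1)) :
    adjoint s (ξ 0) = 0 := by
  ext n
  simp [adjoint_shift_apply hs, ξ, lp.single_apply]

theorem adjoint_shift_ξ_succ {s : H →L[ℂ] H} (hs : ∀ n, s (ξ n) = ξ (n + 1)) (k : ℕ) :
    adjoint s (ξ (k + 1)) = ξ k := by
  ext n
  simp [adjoint_shift_apply hs, ξ, lp.single_apply, Pi.single_apply]

theorem shift_apply_zero {s : H →L[ℂ] H} (hs : ∀ n, s (ξ n) = ξ (n + 1)) (x : H) :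
    s x 0 = 0 := by
  rw [← inner_ξ_left, ← adjoint_inner_left, adjoint_shift_ξ_zero hs, inner_zero_left]

theorem shift_apply_succ {s : H →L[ℂ] H} (hs : ∀ n, s (ξ n) = ξ (n + 1)) (x : H) (k : ℕ) :
    s x (k + 1) = x k := by
  rw [← inner_ξ_left, ← adjoint_inner_left, adjoint_shift_ξ_succ hs, inner_ξ_left]

/-- If `s` is the unilateral shift on `ℓ²(ℕ,ℂ)`, then the operator `s + s*` has no
eigenvalues: any eigenvector equation `(s + s*) v = λ v` forces `v = 0`. -/
theorem stmt8 (s : H →L[ℂ] H)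
    (hs : ∀ n : ℕ, s (ξ n) = ξ (n + 1))
    (lam : ℂ) (v : H)
    (heig : (s + adjoint s) v = lam • v) :
    v = 0 := by
  by_contra hv
  have hreal : conj lam = lam :=
    (IsSelfAdjoint.add_star_self s).isSymmetric.conj_eigenvalue_eq_self
      (Module.End.hasEigenvalue_of_hasEigenvector ⟨Module.End.mem_eigenspace_iff.2 heig, hv⟩)
  have hcoord (n : ℕ) : s v n + adjoint s v n = lam * v n := by
    simpa using congrArg (· n) heig
  obtain ⟨t, rfl⟩ : ∃ t : ℝ, (t : ℂ) = lam := ⟨lam.re, Complex.conj_eq_iff_re.1 hreal⟩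
  have hlim : Tendsto (⇑v) atTop (𝓝 0) :=
    Nat.cofinite_eq_atTop ▸ lp.tendsto_cofinite_zero (by norm_num) v
  have h₁ : v 1 = t * v 0 := by
    simpa [shift_apply_zero hs, adjoint_shift_apply hs] using hcoord 0
  have hrec (n : ℕ) : v (n + 2) = t * v (n + 1) - v n := by
    rw [← hcoord (n + 1), shift_apply_succ hs, adjoint_shift_apply hs]
    ring
  exact hv (lp.ext (eq_zero_of_chebyshev_recurrence_of_tendsto h₁ hrec hlim))
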